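/- arXiv:1706.09178 — 2 statements merged into one kernel-verified Lean document; each statement's English description precedes it below -/
import Mathlib

section
/- Every totally positive integer x in a real quadratic field K can be written uniquely as x = e β_{j_0} + f β_{j_0+1} for some index j_0 ∈ ℤ and integers e ≥ 1, f ≥ 0, where (β_j)_{j∈ℤ} is the increasing sequence of indecomposable elements of O_K^+. -/
open Real Filter

noncomputable def omg (D : ℕ) : ℝ := if D % 4 = 1 then (1 + Real.sqrt D) / 2 else Real.sqrt D

noncomputable def omgc (D : ℕ) : ℝ := if D % 4 = 1 then (1 - Real.sqrt D) / 2 else -Real.sqrt D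

noncomputable def sigmaD (D : ℕ) : ℝ := omg D + (⌊-omgc D⌋ : ℤ)

noncomputable def gam (D : ℕ) : ℕ → ℝ
  | 0 => sigmaD D
  | n + 1 => 1 / (gam D n - ⌊gam D n⌋)

/-- partial quotients of the continued fraction of σ_D -/
noncomputable def uD (D : ℕ) (n : ℕ) : ℤ := ⌊gam D n⌋

noncomputable def emb1 (D : ℕ) (x : ℤ × ℤ) : ℝ := (x.1 : ℝ) + (x.2 : ℝ) * omg D

noncomputable def emb2 (D : ℕ) (x : ℤ × ℤ) : ℝ := (x.1 : ℝ) + (x.2 : ℝ) * omgc D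

def conjp (D : ℕ) (x : ℤ × ℤ) : ℤ × ℤ := if D % 4 = 1 then (x.1 + x.2, -x.2) else (x.1, -x.2)

def TotPos (D : ℕ) (x : ℤ × ℤ) : Prop := 0 < emb1 D x ∧ 0 < emb2 D x

def Indec (D : ℕ) (x : ℤ × ℤ) : Prop :=
  TotPos D x ∧ ¬ ∃ y z : ℤ × ℤ, TotPos D y ∧ TotPos D z ∧ x = y + z

noncomputable def Nm (D : ℕ) (x : ℤ × ℤ) : ℝ := emb1 D x * emb2 D x

noncomputable def disc (D : ℕ) : ℝ := if D % 4 = 1 then (D : ℝ) else 4 * (D : ℝ)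

def UniqDec (D : ℕ) (x : ℤ × ℤ) : Prop :=
  ∃! m : Multiset (ℤ × ℤ), (∀ y ∈ m, Indec D y) ∧ m.sum = x

/-!
Order totally positive elements by the ratio `emb1 / emb2` of their two embeddings. Along the
indecomposables `emb1` increases and `emb2` decreases (otherwise `β k - β j` would be totally
positive and `β k` decomposable), so the ratio increases strictly along `β` and is unbounded in
both directions: `x` lies in a unique interval `[embRatio (β k), embRatio (β (k + 1)))`, that
is, in the cone spanned by `β k` (with positive coefficient) and `β (k + 1)`.

The half-open parallelogram spanned by `β k` and `β (k + 1)` contains no nonzero lattice point: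
such a point `w`, or its reflection `β k + β (k + 1) - w`, would be totally positive, below
`β (k + 1)` in the first embedding and below `β k` in the second. But every totally positive
element dominates some indecomposable `β j` in both embeddings, which forces `k < j < k + 1`.
Hence the real coefficients of `x` in the basis `β k, β (k + 1)` are integers.
-/

lemma StrictMono.existsUnique_le_lt_succ {α : Type*} [LinearOrder α] {f : ℤ → α}
    (hf : StrictMono f) {a : α} (hlo : ∃ j, f j ≤ a) (hhi : ∃ j, a < f j) :
    ∃! k, f k ≤ a ∧ a < f (k + 1) := by
  obtain ⟨J, hJ⟩ := hhi
  have hbdd : ∃ b : ℤ, ∀ z, f z ≤ a → z ≤ b :=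
    ⟨J, fun z hz => hf.le_iff_le.mp (hz.trans hJ.le)⟩
  obtain ⟨k, hk, hmax⟩ := Int.exists_greatest_of_bdd hbdd hlo
  refine ⟨k, ⟨hk, lt_of_not_ge fun h => by linarith [hmax _ h]⟩, ?_⟩
  rintro k' ⟨hk'1, hk'2⟩
  refine le_antisymm (hmax k' hk'1) (not_lt.mp fun hlt => ?_)
  exact (hk'2.trans_le ((hf.monotone (Int.add_one_le_of_lt hlt)).trans hk)).false

section Cone

variable {p q r s : ℝ}

lemma div_le_div_and_div_lt_div_of_eq_add {α γ u v : ℝ} (hq : 0 < q) (hs : 0 < s)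
    (hpr : p / q < r / s) (hα : 0 < α) (hγ : 0 ≤ γ)
    (hu : u = α * p + γ * r) (hv : v = α * q + γ * s) :
    p / q ≤ u / v ∧ u / v < r / s := by
  rw [div_lt_div_iff₀ hq hs] at hpr
  have hv0 : 0 < v := by rw [hv]; positivity
  rw [div_le_div_iff₀ hq hv0, div_lt_div_iff₀ hv0 hs, hu, hv]
  constructor <;> nlinarith

lemma exists_eq_add_of_div_le_div_lt_div {u v : ℝ} (hq : 0 < q) (hs : 0 < s)
    (hpr : p / q < r / s) (hv : 0 < v) (h1 : p / q ≤ u / v) (h2 : u / v < r / s) :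
    ∃ α γ : ℝ, 0 < α ∧ 0 ≤ γ ∧ u = α * p + γ * r ∧ v = α * q + γ * s := by
  rw [div_lt_div_iff₀ hq hs] at hpr
  rw [div_le_div_iff₀ hq hv] at h1
  rw [div_lt_div_iff₀ hv hs] at h2
  have hdet : 0 < r * q - p * s := by linarith
  -- Cramer's rule
  refine ⟨(v * r - u * s) / (r * q - p * s), (u * q - v * p) / (r * q - p * s),
    div_pos (by linarith) hdet, div_nonneg (by linarith) hdet.le, ?_, ?_⟩ <;>
  · rw [eq_comm, div_mul_eq_mul_div, div_mul_eq_mul_div, ← add_div, div_eq_iff hdet.ne']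
    ring

lemma eq_and_eq_of_add_eq_add {α γ α' γ' : ℝ} (hs : s ≠ 0) (hdet : p * s ≠ r * q)
    (h1 : α * p + γ * r = α' * p + γ' * r) (h2 : α * q + γ * s = α' * q + γ' * s) :
    α = α' ∧ γ = γ' := by
  have hα : (α - α') * (p * s - r * q) = 0 := by linear_combination s * h1 - r * h2
  obtain rfl : α = α' := by simpa [sub_eq_zero, hdet] using hα
  exact ⟨rfl, mul_right_cancel₀ hs (by linarith)⟩

end Cone

lemma mul_add_mul_lt {a b t g : ℝ} (ha : 0 ≤ a) (hab : a < b) (htg : t + g ≤ 1)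
    (hg1 : g < 1) : t * a + g * b < b := by
  nlinarith

lemma mul_add_mul_pos {a b t g : ℝ} (ha : 0 < a) (hb : 0 < b) (ht : 0 ≤ t) (hg : 0 ≤ g)
    (htg : 0 < t + g) : 0 < t * a + g * b := by
  rcases ht.eq_or_lt with rfl | ht
  · rw [zero_add] at htg; positivity
  · positivity

section Embeddings

variable {D : ℕ}

lemma emb1_add (x y : ℤ × ℤ) : emb1 D (x + y) = emb1 D x + emb1 D y := by
  simp only [emb1, Prod.fst_add, Prod.snd_add, Int.cast_add]; ring

lemma emb2_add (x y : ℤ × ℤ) : emb2 D (x + y) = emb2 D x + emb2 D y := by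
  simp only [emb2, Prod.fst_add, Prod.snd_add, Int.cast_add]; ring

lemma emb1_sub (x y : ℤ × ℤ) : emb1 D (x - y) = emb1 D x - emb1 D y := by
  simp only [emb1, Prod.fst_sub, Prod.snd_sub, Int.cast_sub]; ring

lemma emb2_sub (x y : ℤ × ℤ) : emb2 D (x - y) = emb2 D x - emb2 D y := by
  simp only [emb2, Prod.fst_sub, Prod.snd_sub, Int.cast_sub]; ring

lemma emb1_zsmul (n : ℤ) (x : ℤ × ℤ) : emb1 D (n • x) = n * emb1 D x := by
  simp only [emb1, Prod.smul_fst, Prod.smul_snd, smul_eq_mul, Int.cast_mul]; ring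

lemma emb2_zsmul (n : ℤ) (x : ℤ × ℤ) : emb2 D (n • x) = n * emb2 D x := by
  simp only [emb2, Prod.smul_fst, Prod.smul_snd, smul_eq_mul, Int.cast_mul]; ring

lemma omg_sub_omgc_pos (hD : 0 < D) : 0 < omg D - omgc D := by
  have : 0 < √(D : ℝ) := Real.sqrt_pos.mpr (by exact_mod_cast hD)
  unfold omg omgc
  split_ifs <;> linarith

lemma irrational_omgc (hD2 : 2 ≤ D) (hsq : Squarefree D) : Irrational (omgc D) := by
  have hsqrt : Irrational √(D : ℝ) := by
    rw [irrational_sqrt_natCast_iff]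
    rintro ⟨k, rfl⟩
    have : k = 1 := Nat.isUnit_iff.mp (hsq k dvd_rfl)
    subst this
    omega
  unfold omgc
  split_ifs
  · simpa using (hsqrt.ratCast_sub 1).div_ratCast (q := 2) (by norm_num)
  · exact hsqrt.neg

lemma eq_zero_of_emb2_eq_zero (hD2 : 2 ≤ D) (hsq : Squarefree D) {x : ℤ × ℤ}
    (hx : emb2 D x = 0) : x = 0 := by
  by_cases h2 : x.2 = 0
  · have h1 : x.1 = 0 := by simpa [emb2, h2] using hx
    exact Prod.ext h1 h2
  · exact absurd hx (((irrational_omgc hD2 hsq).intCast_mul h2).intCast_add x.1).ne_zero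

lemma mem_Icc_ceil_of_abs_le {n : ℤ} {A : ℝ} (h : |(n : ℝ)| ≤ A) :
    n ∈ Set.Icc (-⌈A⌉) ⌈A⌉ :=
  abs_le.mp (Int.cast_le.mp ((Int.cast_abs (R := ℝ) ▸ h).trans (Int.le_ceil A)))

lemma finite_setOf_totPos_emb_le (hD : 0 < D) (M N : ℝ) :
    {x : ℤ × ℤ | TotPos D x ∧ emb1 D x ≤ M ∧ emb2 D x ≤ N}.Finite := by
  have hc := omg_sub_omgc_pos hD
  set B := max M N / (omg D - omgc D)
  set A := M + B * |omg D|
  refine ((Set.finite_Icc (-⌈A⌉) ⌈A⌉).prod (Set.finite_Icc (-⌈B⌉) ⌈B⌉)).subset ?_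
  rintro ⟨a, b⟩ ⟨⟨h1, h2⟩, hM, hN⟩
  have hb : |(b : ℝ)| ≤ B := by
    have hdiff : (b : ℝ) * (omg D - omgc D) = emb1 D (a, b) - emb2 D (a, b) := by
      simp only [emb1, emb2]; ring
    rw [le_div_iff₀ hc, ← abs_of_pos hc, ← abs_mul, hdiff, abs_le]
    constructor <;> linarith [le_max_left M N, le_max_right M N]
  have ha : |(a : ℝ)| ≤ A :=
    calc |(a : ℝ)| = |emb1 D (a, b) - b * omg D| := by simp [emb1]
      _ ≤ |emb1 D (a, b)| + |(b : ℝ)| * |omg D| := by rw [← abs_mul]; exact abs_sub _ _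
      _ ≤ A := by
        rw [abs_of_pos h1]; exact add_le_add hM (mul_le_mul_of_nonneg_right hb (abs_nonneg _))
  exact ⟨mem_Icc_ceil_of_abs_le ha, mem_Icc_ceil_of_abs_le hb⟩

lemma exists_indec_le (hD : 0 < D) {x : ℤ × ℤ} (hx : TotPos D x) :
    ∃ y, Indec D y ∧ emb1 D y ≤ emb1 D x ∧ emb2 D y ≤ emb2 D x := by
  obtain ⟨y, ⟨hy, hy1, hy2⟩, hmin⟩ :=
    Set.exists_min_image _ (emb1 D) (finite_setOf_totPos_emb_le hD (emb1 D x) (emb2 D x))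
      ⟨x, hx, le_rfl, le_rfl⟩
  refine ⟨y, ⟨hy, ?_⟩, hy1, hy2⟩
  rintro ⟨a, b, ha, hb, rfl⟩
  rw [emb1_add] at hy1 hmin
  rw [emb2_add] at hy2
  have := hmin a ⟨ha, by linarith [hb.1], by linarith [hb.2]⟩
  linarith [hb.1]

end Embeddings

noncomputable def embRatio (D : ℕ) (x : ℤ × ℤ) : ℝ := emb1 D x / emb2 D x

structure IsIndecEnum (D : ℕ) (β : ℤ → ℤ × ℤ) : Prop where
  indec : ∀ j, Indec D (β j)
  surj : ∀ x, Indec D x → ∃ j, β j = x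
  strictMono_emb1 : StrictMono fun j => emb1 D (β j)

namespace IsIndecEnum

variable {D : ℕ} {β : ℤ → ℤ × ℤ}

lemma totPos (hβ : IsIndecEnum D β) (j : ℤ) : TotPos D (β j) := (hβ.indec j).1

lemma strictAnti_emb2 (hβ : IsIndecEnum D β) (hD2 : 2 ≤ D) (hsq : Squarefree D) :
    StrictAnti fun j => emb2 D (β j) := by
  intro j k hjk
  by_contra! hle
  have h1 : 0 < emb1 D (β k - β j) := by
    rw [emb1_sub]; linarith [hβ.strictMono_emb1 hjk]
  have h2 : 0 < emb2 D (β k - β j) := by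
    refine lt_of_le_of_ne (by rw [emb2_sub]; linarith) fun h => ?_
    rw [eq_zero_of_emb2_eq_zero hD2 hsq h.symm] at h1
    simp [emb1] at h1
  exact (hβ.indec k).2 ⟨β j, β k - β j, hβ.totPos j, ⟨h1, h2⟩, by abel⟩

lemma not_totPos_of_emb1_lt_of_emb2_lt (hβ : IsIndecEnum D β) (hD2 : 2 ≤ D)
    (hsq : Squarefree D) {j : ℤ} {w : ℤ × ℤ} (h1 : emb1 D w < emb1 D (β (j + 1)))
    (h2 : emb2 D w < emb2 D (β j)) : ¬ TotPos D w := by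
  intro hw
  obtain ⟨y, hy, hy1, hy2⟩ := exists_indec_le (by omega) hw
  obtain ⟨k, rfl⟩ := hβ.surj y hy
  have hkj : k < j + 1 := hβ.strictMono_emb1.lt_iff_lt.mp (hy1.trans_lt h1)
  have hjk : j < k := (hβ.strictAnti_emb2 hD2 hsq).lt_iff_gt.mp (hy2.trans_lt h2)
  omega

lemma coeffs_eq_zero_of_add_le_one (hβ : IsIndecEnum D β) (hD2 : 2 ≤ D) (hsq : Squarefree D)
    {j : ℤ} {w : ℤ × ℤ} {t g : ℝ} (ht : 0 ≤ t) (hg : 0 ≤ g) (ht1 : t < 1) (hg1 : g < 1)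
    (htg : t + g ≤ 1) (h1 : emb1 D w = t * emb1 D (β j) + g * emb1 D (β (j + 1)))
    (h2 : emb2 D w = t * emb2 D (β j) + g * emb2 D (β (j + 1))) : t = 0 ∧ g = 0 := by
  by_contra! hne
  have htg0 : 0 < t + g := by
    by_contra!
    exact hne (by linarith) (by linarith)
  have hp := hβ.totPos j
  have hr := hβ.totPos (j + 1)
  refine hβ.not_totPos_of_emb1_lt_of_emb2_lt hD2 hsq (j := j) (w := w) ?_ ?_ ⟨?_, ?_⟩
  · rw [h1]
    exact mul_add_mul_lt hp.1.le (hβ.strictMono_emb1 (lt_add_one j)) htg hg1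
  · rw [h2, add_comm]
    exact mul_add_mul_lt hr.2.le (hβ.strictAnti_emb2 hD2 hsq (lt_add_one j)) (by linarith) ht1
  · rw [h1]; exact mul_add_mul_pos hp.1 hr.1 ht hg htg0
  · rw [h2]; exact mul_add_mul_pos hp.2 hr.2 ht hg htg0

lemma coeffs_eq_zero_of_lt_one (hβ : IsIndecEnum D β) (hD2 : 2 ≤ D) (hsq : Squarefree D)
    {j : ℤ} {w : ℤ × ℤ} {t g : ℝ} (ht : 0 ≤ t) (hg : 0 ≤ g) (ht1 : t < 1) (hg1 : g < 1)
    (h1 : emb1 D w = t * emb1 D (β j) + g * emb1 D (β (j + 1)))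
    (h2 : emb2 D w = t * emb2 D (β j) + g * emb2 D (β (j + 1))) : t = 0 ∧ g = 0 := by
  rcases le_or_gt (t + g) 1 with htg | htg
  · exact hβ.coeffs_eq_zero_of_add_le_one hD2 hsq ht hg ht1 hg1 htg h1 h2
  -- reflect through the centre of the parallelogram spanned by `β j` and `β (j + 1)`
  have := hβ.coeffs_eq_zero_of_add_le_one hD2 hsq (w := β j + β (j + 1) - w)
    (sub_nonneg.mpr ht1.le) (sub_nonneg.mpr hg1.le) (by linarith) (by linarith) (by linarith)
    (by rw [emb1_sub, emb1_add, h1]; ring) (by rw [emb2_sub, emb2_add, h2]; ring)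
  linarith [this.1]

lemma strictMono_embRatio (hβ : IsIndecEnum D β) (hD2 : 2 ≤ D) (hsq : Squarefree D) :
    StrictMono fun j => embRatio D (β j) := fun _ k hjk =>
  div_lt_div₀ (hβ.strictMono_emb1 hjk) (hβ.strictAnti_emb2 hD2 hsq hjk).le
    (hβ.totPos k).1.le (hβ.totPos k).2

lemma exists_mem_lt_emb1_or_lt_emb2 (hβ : IsIndecEnum D β) (hD : 0 < D) {S : Set ℤ}
    (hS : S.Infinite) (M N : ℝ) : ∃ j ∈ S, M < emb1 D (β j) ∨ N < emb2 D (β j) := by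
  have hinj : Function.Injective β := .of_comp (f := emb1 D) hβ.strictMono_emb1.injective
  obtain ⟨_, ⟨j, hj, rfl⟩, hnot⟩ :=
    (hS.image hinj.injOn).exists_notMem_finite (finite_setOf_totPos_emb_le hD M N)
  refine ⟨j, hj, ?_⟩
  simp only [Set.mem_ofPred_eq, not_and_or, not_le] at hnot
  exact hnot.resolve_left (not_not.mpr (hβ.totPos j))

lemma exists_lt_embRatio (hβ : IsIndecEnum D β) (hD2 : 2 ≤ D) (hsq : Squarefree D) (a : ℝ) :
    ∃ j, a < embRatio D (β j) := by
  have hanti := (hβ.strictAnti_emb2 hD2 hsq).antitone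
  obtain ⟨j, hj, h | h⟩ := hβ.exists_mem_lt_emb1_or_lt_emb2 (by omega) (Set.Ici_infinite 0)
    (|a| * emb2 D (β 0)) (emb2 D (β 0))
  · refine ⟨j, ?_⟩
    have hj2 := (hβ.totPos j).2
    rw [embRatio, lt_div_iff₀ hj2]
    nlinarith [mul_le_mul_of_nonneg_left (hanti hj) (abs_nonneg a),
      mul_le_mul_of_nonneg_right (le_abs_self a) hj2.le]
  · exact absurd (hanti hj) (not_le.mpr h)

lemma exists_embRatio_le (hβ : IsIndecEnum D β) (hD : 0 < D) {a : ℝ} (ha : 0 < a) :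
    ∃ j, embRatio D (β j) ≤ a := by
  have hmono := hβ.strictMono_emb1.monotone
  obtain ⟨j, hj, h | h⟩ := hβ.exists_mem_lt_emb1_or_lt_emb2 hD (Set.Iic_infinite 0)
    (emb1 D (β 0)) (emb1 D (β 0) / a)
  · exact absurd (hmono hj) (not_le.mpr h)
  · refine ⟨j, ?_⟩
    rw [div_lt_iff₀ ha] at h
    rw [embRatio, div_le_iff₀ (hβ.totPos j).2]
    linarith [hmono hj]

lemma embRatio_bounds_of_eq (hβ : IsIndecEnum D β) (hD2 : 2 ≤ D) (hsq : Squarefree D)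
    {x : ℤ × ℤ} {k e f : ℤ} (he : 1 ≤ e) (hf : 0 ≤ f) (hx : x = e • β k + f • β (k + 1)) :
    embRatio D (β k) ≤ embRatio D x ∧ embRatio D x < embRatio D (β (k + 1)) :=
  div_le_div_and_div_lt_div_of_eq_add (hβ.totPos k).2 (hβ.totPos (k + 1)).2
    (hβ.strictMono_embRatio hD2 hsq (lt_add_one k)) (Int.cast_pos.mpr he) (Int.cast_nonneg hf)
    (by rw [hx, emb1_add, emb1_zsmul, emb1_zsmul])
    (by rw [hx, emb2_add, emb2_zsmul, emb2_zsmul])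

lemma exists_eq_of_embRatio_bounds (hβ : IsIndecEnum D β) (hD2 : 2 ≤ D) (hsq : Squarefree D)
    {x : ℤ × ℤ} (hx : TotPos D x) {k : ℤ} (h1 : embRatio D (β k) ≤ embRatio D x)
    (h2 : embRatio D x < embRatio D (β (k + 1))) :
    ∃ e f : ℤ, 1 ≤ e ∧ 0 ≤ f ∧ x = e • β k + f • β (k + 1) := by
  obtain ⟨α, γ, hα, hγ, hu, hv⟩ := exists_eq_add_of_div_le_div_lt_div (hβ.totPos k).2
    (hβ.totPos (k + 1)).2 (hβ.strictMono_embRatio hD2 hsq (lt_add_one k)) hx.2 h1 h2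
  set w := x - ⌊α⌋ • β k - ⌊γ⌋ • β (k + 1) with hw
  have hw1 : emb1 D w = Int.fract α * emb1 D (β k) + Int.fract γ * emb1 D (β (k + 1)) := by
    rw [hw, emb1_sub, emb1_sub, emb1_zsmul, emb1_zsmul, hu, Int.fract, Int.fract]; ring
  have hw2 : emb2 D w = Int.fract α * emb2 D (β k) + Int.fract γ * emb2 D (β (k + 1)) := by
    rw [hw, emb2_sub, emb2_sub, emb2_zsmul, emb2_zsmul, hv, Int.fract, Int.fract]; ring
  obtain ⟨hfα, hfγ⟩ := hβ.coeffs_eq_zero_of_lt_one hD2 hsq (Int.fract_nonneg α)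
    (Int.fract_nonneg γ) (Int.fract_lt_one α) (Int.fract_lt_one γ) hw1 hw2
  have hw0 : w = 0 := eq_zero_of_emb2_eq_zero hD2 hsq (by rw [hw2, hfα, hfγ]; ring)
  refine ⟨⌊α⌋, ⌊γ⌋, (Int.cast_pos (R := ℝ)).mp ?_, Int.floor_nonneg.mpr hγ, ?_⟩
  · linarith [Int.floor_add_fract α]
  · rwa [hw, sub_sub, sub_eq_zero] at hw0

lemma eq_and_eq_of_zsmul_add_zsmul_eq (hβ : IsIndecEnum D β) (hD2 : 2 ≤ D) (hsq : Squarefree D)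
    {k e f e' f' : ℤ} (h : e • β k + f • β (k + 1) = e' • β k + f' • β (k + 1)) :
    e = e' ∧ f = f' := by
  have hdet := hβ.strictMono_embRatio hD2 hsq (lt_add_one k)
  simp only [embRatio] at hdet
  rw [div_lt_div_iff₀ (hβ.totPos k).2 (hβ.totPos (k + 1)).2] at hdet
  have h1 := congrArg (emb1 D) h
  have h2 := congrArg (emb2 D) h
  simp only [emb1_add, emb1_zsmul] at h1
  simp only [emb2_add, emb2_zsmul] at h2
  exact_mod_cast eq_and_eq_of_add_eq_add (hβ.totPos (k + 1)).2.ne' hdet.ne h1 h2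

end IsIndecEnum

theorem stmt8_general (D : ℕ)
    (hD2 : 2 ≤ D) (hsq : Squarefree D)
    (β : ℤ → ℤ × ℤ)
    (hβind : ∀ j : ℤ, Indec D (β j))
    (hβsurj : ∀ x : ℤ × ℤ, Indec D x → ∃ j : ℤ, β j = x)
    (hβmono : StrictMono fun j : ℤ => emb1 D (β j))
 :
    ∀ x : ℤ × ℤ, TotPos D x →
      ∃! jef : ℤ × ℤ × ℤ, 1 ≤ jef.2.1 ∧ 0 ≤ jef.2.2 ∧
        x = jef.2.1 • β jef.1 + jef.2.2 • β (jef.1 + 1) := by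
  have hβ : IsIndecEnum D β := ⟨hβind, hβsurj, hβmono⟩
  intro x hx
  obtain ⟨k, ⟨hk1, hk2⟩, hk⟩ := (hβ.strictMono_embRatio hD2 hsq).existsUnique_le_lt_succ
    (hβ.exists_embRatio_le (by omega) (div_pos hx.1 hx.2)) (hβ.exists_lt_embRatio hD2 hsq _)
  obtain ⟨e, f, he, hf, rfl⟩ := hβ.exists_eq_of_embRatio_bounds hD2 hsq hx hk1 hk2
  refine ⟨(k, e, f), ⟨he, hf, rfl⟩, ?_⟩
  rintro ⟨k', e', f'⟩ ⟨he', hf', h⟩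
  obtain rfl : k' = k := hk k' (hβ.embRatio_bounds_of_eq hD2 hsq he' hf' h)
  obtain ⟨rfl, rfl⟩ := hβ.eq_and_eq_of_zsmul_add_zsmul_eq hD2 hsq h.symm
  rfl

theorem stmt8 (D : ℕ)
    (hD2 : 2 ≤ D) (hsq : Squarefree D)
    (β : ℤ → ℤ × ℤ)
    (hβind : ∀ j : ℤ, Indec D (β j))
    (hβsurj : ∀ x : ℤ × ℤ, Indec D x → ∃ j : ℤ, β j = x)
    (hβmono : StrictMono fun j : ℤ => emb1 D (β j))
    (hβ0 : β 0 = (1, 0))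
 :
    ∀ x : ℤ × ℤ, TotPos D x →
      ∃! jef : ℤ × ℤ × ℤ, 1 ≤ jef.2.1 ∧ 0 ≤ jef.2.2 ∧
        x = jef.2.1 • β jef.1 + jef.2.2 • β (jef.1 + 1) :=
  stmt8_general D hD2 hsq β hβind hβsurj hβmono
end

section
/- For all i ≥ -1, the norms N_i = |N(α_i)| of the convergents satisfy N_{i+1} = √Δ/γ_{i+2} - N_i/γ_{i+2}², where γ_{i+2} = [u_{i+2}; u_{i+3}, u_{i+4}, …] is the tail of the continued fraction and Δ is the discriminant of K. -/
open Real Filter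

/-- first real embedding of α_i = p_i - q_i ω_D' -/
noncomputable def ar (D : ℕ) (p q : ℤ → ℤ) (i : ℤ) : ℝ := (p i : ℝ) - (q i : ℝ) * omgc D

/-- second real embedding (Galois conjugate) of α_i -/
noncomputable def ac (D : ℕ) (p q : ℤ → ℤ) (i : ℤ) : ℝ := (p i : ℝ) - (q i : ℝ) * omg D

/-- first embedding of the semiconvergent α_{i,r} = α_i + r α_{i+1} -/
noncomputable def ar2 (D : ℕ) (p q : ℤ → ℤ) (i r : ℤ) : ℝ := ar D p q i + (r : ℝ) * ar D p q (i + 1)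

/-- conjugate embedding of the semiconvergent α_{i,r} -/
noncomputable def ac2 (D : ℕ) (p q : ℤ → ℤ) (i r : ℤ) : ℝ := ac D p q i + (r : ℝ) * ac D p q (i + 1)

/-- N_i = |N(α_i)| -/
noncomputable def Ni (D : ℕ) (p q : ℤ → ℤ) (i : ℤ) : ℝ := |ar D p q i * ac D p q i|

/-!
The conjugates `α_i' = p_i - q_i ω_D` of the convergents satisfy `γ_{i+2} α_{i+1}' = -α_i'`,
which is the identity `ω_D = (p_{i+1} γ_{i+2} + p_i) / (q_{i+1} γ_{i+2} + q_i)` in disguise.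
Together with `p_i q_{i+1} - p_{i+1} q_i = ±1` it gives
`|α_i'| (q_{i+1} γ_{i+2} + q_i) = γ_{i+2}`. Since `α_i = α_i' + q_i √Δ ≥ 0`, we have
`N_i = α_i |α_i'|`, and the recurrence is a direct computation.
-/

section Quadratic

variable {D : ℕ}

lemma omg_sub_omgc : omg D - omgc D = Real.sqrt (disc D) := by
  unfold omg omgc disc
  split_ifs
  · ring
  · rw [Real.sqrt_mul (by norm_num), show Real.sqrt 4 = 2 by
      rw [show (4 : ℝ) = 2 ^ 2 by norm_num, Real.sqrt_sq (by norm_num)]]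
    ring

lemma omgc_nonpos : omgc D ≤ 0 := by
  unfold omgc
  split_ifs with h
  · have : (1 : ℝ) ≤ D := by exact_mod_cast (show 1 ≤ D by omega)
    linarith [Real.one_le_sqrt.mpr this]
  · linarith [Real.sqrt_nonneg D]

lemma omg_nonneg : 0 ≤ omg D := by
  unfold omg
  split_ifs <;> positivity

lemma irrational_omg (hD2 : 2 ≤ D) (hsq : Squarefree D) : Irrational (omg D) := by
  have hsqrt : Irrational (Real.sqrt D) := by
    rw [irrational_sqrt_natCast_iff]
    rintro ⟨r, hr⟩
    have := Nat.isUnit_iff.mp (hsq r hr.symm.dvd)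
    subst this
    omega
  unfold omg
  split_ifs
  · simpa using (hsqrt.intCast_add 1).div_intCast (m := 2) (by norm_num)
  · exact hsqrt

lemma uD_zero : uD D 0 = ⌊omg D⌋ + ⌊-omgc D⌋ :=
  Int.floor_add_intCast _ _

lemma ceil_uD_zero_div_two : ⌈(uD D 0 : ℚ) / 2⌉ = ⌊omg D⌋ := by
  rw [uD_zero]
  unfold omg omgc
  split_ifs
  · rw [show -((1 - Real.sqrt D) / 2) = (1 + Real.sqrt D) / 2 + ((-1 : ℤ) : ℝ) by
        push_cast; ring,
      Int.floor_add_intCast, Int.ceil_eq_iff]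
    constructor <;> push_cast <;> linarith
  · rw [neg_neg, ← two_mul, Int.cast_mul, Int.cast_ofNat,
      mul_div_cancel_left₀ _ (two_ne_zero), Int.ceil_intCast]

end Quadratic

section ContinuedFraction

variable {D : ℕ}

lemma gam_succ (n : ℕ) : gam D (n + 1) = (Int.fract (gam D n))⁻¹ :=
  one_div _

lemma fract_gam_zero : Int.fract (gam D 0) = Int.fract (omg D) :=
  Int.fract_add_intCast _ _

lemma uD_succ_nonneg (n : ℕ) : 0 ≤ uD D (n + 1) := by
  rw [uD, Int.floor_nonneg, gam_succ]
  exact inv_nonneg.mpr (Int.fract_nonneg _)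

lemma irrational_gam (hD2 : 2 ≤ D) (hsq : Squarefree D) (n : ℕ) : Irrational (gam D n) := by
  induction n with
  | zero => exact (irrational_omg hD2 hsq).add_intCast _
  | succ n ih =>
    rw [gam_succ, Int.fract]
    exact (ih.sub_intCast _).inv

lemma fract_gam_pos (hD2 : 2 ≤ D) (hsq : Squarefree D) (n : ℕ) : 0 < Int.fract (gam D n) :=
  Int.fract_pos.mpr ((irrational_gam hD2 hsq n).ne_int _)

lemma gam_succ_pos (hD2 : 2 ≤ D) (hsq : Squarefree D) (n : ℕ) : 0 < gam D (n + 1) := by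
  rw [gam_succ]
  exact inv_pos.mpr (fract_gam_pos hD2 hsq n)

lemma gam_succ_mul_fract (hD2 : 2 ≤ D) (hsq : Squarefree D) (n : ℕ) :
    gam D (n + 1) * Int.fract (gam D n) = 1 := by
  rw [gam_succ, inv_mul_cancel₀ (fract_gam_pos hD2 hsq n).ne']

lemma gam_toNat_add_two_pos (hD2 : 2 ≤ D) (hsq : Squarefree D) {i : ℤ} (hi : -1 ≤ i) :
    0 < gam D (i + 2).toNat := by
  rw [show (i + 2).toNat = (i + 1).toNat + 1 by omega]
  exact gam_succ_pos hD2 hsq _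

end ContinuedFraction

section Recurrence

variable {u : ℕ → ℤ}

lemma nonneg_of_recurrence (hu : ∀ n, 0 ≤ u (n + 1)) {f : ℤ → ℤ}
    (hm1 : 0 ≤ f (-1)) (h0 : 0 ≤ f 0)
    (hrec : ∀ i : ℤ, -1 ≤ i → f (i + 2) = u (i + 2).toNat * f (i + 1) + f i) :
    ∀ i : ℤ, -1 ≤ i → 0 ≤ f i := by
  suffices h : ∀ i : ℤ, -1 ≤ i → 0 ≤ f i ∧ 0 ≤ f (i + 1) from fun i hi ↦ (h i hi).1
  refine Int.leInduction ⟨hm1, by simpa using h0⟩ fun i hi ⟨hfi, hfi1⟩ ↦ ⟨hfi1, ?_⟩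
  rw [add_assoc, one_add_one_eq_two, hrec i hi, show (i + 2).toNat = (i + 1).toNat + 1 by omega]
  have := hu (i + 1).toNat
  positivity

lemma abs_det_of_recurrence {p q : ℤ → ℤ}
    (hprec : ∀ i : ℤ, -1 ≤ i → p (i + 2) = u (i + 2).toNat * p (i + 1) + p i)
    (hqrec : ∀ i : ℤ, -1 ≤ i → q (i + 2) = u (i + 2).toNat * q (i + 1) + q i) :
    ∀ i : ℤ, -1 ≤ i →
      |p i * q (i + 1) - p (i + 1) * q i| = |p (-1) * q 0 - p 0 * q (-1)| := by
  refine Int.leInduction (by norm_num) fun i hi ih ↦ ?_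
  rw [add_assoc, one_add_one_eq_two, hprec i hi, hqrec i hi, ← ih, ← abs_neg]
  ring_nf

end Recurrence

structure IsConvergents (D : ℕ) (p q : ℤ → ℤ) : Prop where
  p_neg_one : p (-1) = 1
  q_neg_one : q (-1) = 0
  p_zero : p 0 = ⌈(uD D 0 : ℚ) / 2⌉
  q_zero : q 0 = 1
  p_rec : ∀ i : ℤ, -1 ≤ i → p (i + 2) = uD D (i + 2).toNat * p (i + 1) + p i
  q_rec : ∀ i : ℤ, -1 ≤ i → q (i + 2) = uD D (i + 2).toNat * q (i + 1) + q i

section Convergents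

variable {D : ℕ} {p q : ℤ → ℤ}

lemma ar_eq_ac_add (i : ℤ) : ar D p q i = ac D p q i + q i * Real.sqrt (disc D) := by
  unfold ar ac
  linear_combination (q i : ℝ) * omg_sub_omgc (D := D)

lemma ar_nonneg {i : ℤ} (hp : 0 ≤ p i) (hq : 0 ≤ q i) : 0 ≤ ar D p q i := by
  unfold ar
  have : (0 : ℝ) ≤ q i := by exact_mod_cast hq
  nlinarith [omgc_nonpos (D := D), (show (0 : ℝ) ≤ p i by exact_mod_cast hp)]

lemma ac_add_two
    (hprec : ∀ i : ℤ, -1 ≤ i → p (i + 2) = uD D (i + 2).toNat * p (i + 1) + p i)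
    (hqrec : ∀ i : ℤ, -1 ≤ i → q (i + 2) = uD D (i + 2).toNat * q (i + 1) + q i)
    {i : ℤ} (hi : -1 ≤ i) :
    ac D p q (i + 2) = uD D (i + 2).toNat * ac D p q (i + 1) + ac D p q i := by
  unfold ac
  rw [hprec i hi, hqrec i hi]
  push_cast
  ring

namespace IsConvergents

variable {D : ℕ} {p q : ℤ → ℤ}

lemma p_nonneg (h : IsConvergents D p q) : ∀ i : ℤ, -1 ≤ i → 0 ≤ p i :=
  nonneg_of_recurrence uD_succ_nonneg (by rw [h.p_neg_one]; exact zero_le_one)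
    (by rw [h.p_zero, ceil_uD_zero_div_two]; exact Int.floor_nonneg.mpr omg_nonneg) h.p_rec

lemma q_nonneg (h : IsConvergents D p q) : ∀ i : ℤ, -1 ≤ i → 0 ≤ q i :=
  nonneg_of_recurrence uD_succ_nonneg h.q_neg_one.ge (by rw [h.q_zero]; exact zero_le_one) h.q_rec

lemma Ni_eq (h : IsConvergents D p q) {i : ℤ} (hi : -1 ≤ i) :
    Ni D p q i = ar D p q i * |ac D p q i| := by
  rw [Ni, abs_mul, abs_of_nonneg (ar_nonneg (h.p_nonneg i hi) (h.q_nonneg i hi))]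

lemma gam_mul_ac_succ (h : IsConvergents D p q) (hD2 : 2 ≤ D) (hsq : Squarefree D) :
    ∀ i : ℤ, -1 ≤ i → gam D (i + 2).toNat * ac D p q (i + 1) = -ac D p q i := by
  refine Int.leInduction ?_ fun i hi ih ↦ ?_
  · have hac0 : ac D p q 0 = -Int.fract (gam D 0) := by
      rw [fract_gam_zero, Int.fract, ac, h.p_zero, h.q_zero, ceil_uD_zero_div_two]
      ring
    have hacm1 : ac D p q (-1) = 1 := by simp [ac, h.p_neg_one, h.q_neg_one]
    rw [show ((-1 : ℤ) + 2).toNat = 0 + 1 by rfl, neg_add_cancel, hac0, hacm1, mul_neg,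
      gam_succ_mul_fract hD2 hsq]
  · have hfract := gam_succ_mul_fract hD2 hsq (i + 2).toNat
    rw [Int.fract, ← uD] at hfract
    rw [show (i + 1 + 2).toNat = (i + 2).toNat + 1 by omega, show i + 1 + 1 = i + 2 by ring,
      ac_add_two h.p_rec h.q_rec hi]
    linear_combination gam D ((i + 2).toNat + 1) * ih - ac D p q (i + 1) * hfract

lemma abs_ac_mul (h : IsConvergents D p q) (hD2 : 2 ≤ D) (hsq : Squarefree D) {i : ℤ}
    (hi : -1 ≤ i) :
    |ac D p q i| * (q (i + 1) * gam D (i + 2).toNat + q i) = gam D (i + 2).toNat := by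
  have hdet : |(p i : ℝ) * q (i + 1) - p (i + 1) * q i| = 1 := by
    have := abs_det_of_recurrence h.p_rec h.q_rec i hi
    rw [h.p_neg_one, h.q_neg_one, h.q_zero, mul_one, mul_zero, sub_zero, abs_one] at this
    exact_mod_cast this
  have key : ac D p q i * (q (i + 1) * gam D (i + 2).toNat + q i) =
      ((p i * q (i + 1) - p (i + 1) * q i : ℤ) : ℝ) * gam D (i + 2).toNat := by
    have hrel := h.gam_mul_ac_succ hD2 hsq i hi
    unfold ac at hrel ⊢
    push_cast
    linear_combination (q i : ℝ) * hrel
  have hpos : (0 : ℝ) ≤ q (i + 1) * gam D (i + 2).toNat + q i := by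
    have := h.q_nonneg i hi
    have := h.q_nonneg (i + 1) (by omega)
    have := gam_toNat_add_two_pos hD2 hsq hi
    positivity
  simpa [abs_mul, hdet, abs_of_nonneg hpos, abs_of_pos (gam_toNat_add_two_pos hD2 hsq hi)]
    using congrArg abs key

end IsConvergents

theorem stmt13 (D : ℕ)
    (hD2 : 2 ≤ D) (hsq : Squarefree D)
    (p q : ℤ → ℤ)
    (hpm1 : p (-1) = 1) (hqm1 : q (-1) = 0)
    (hp0 : p 0 = ⌈(uD D 0 : ℚ) / 2⌉) (hq0 : q 0 = 1)
    (hprec : ∀ i : ℤ, -1 ≤ i → p (i + 2) = uD D (i + 2).toNat * p (i + 1) + p i)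
    (hqrec : ∀ i : ℤ, -1 ≤ i → q (i + 2) = uD D (i + 2).toNat * q (i + 1) + q i)
 :
    ∀ i : ℤ, -1 ≤ i →
      Ni D p q (i + 1) =
        Real.sqrt (disc D) / gam D (i + 2).toNat - Ni D p q i / (gam D (i + 2).toNat) ^ 2 := by
  intro i hi
  have h : IsConvergents D p q := ⟨hpm1, hqm1, hp0, hq0, hprec, hqrec⟩
  have hγ := gam_toNat_add_two_pos hD2 hsq hi
  have hsucc : ac D p q (i + 1) = -ac D p q i / gam D (i + 2).toNat := by
    rw [eq_div_iff hγ.ne', mul_comm]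
    exact h.gam_mul_ac_succ hD2 hsq i hi
  rw [h.Ni_eq (by omega), h.Ni_eq hi, ar_eq_ac_add, ar_eq_ac_add, hsucc, abs_div, abs_neg,
    abs_of_pos hγ]
  field_simp
  linear_combination Real.sqrt (disc D) * h.abs_ac_mul hD2 hsq hi
end Convergents
end
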